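/- For every signed permutation σ of length n, al(σ) + crs(σ) = (n - fwex(σ)/2)(wex(σ) - 1 + neg(σ)) + neg(σ)·wex(σ)/2, where fwex(σ) = 2·wex(σ) + neg(σ). -/

import Mathlib

open Finset Equiv

/-- A signed permutation of length `n`: a bijection of `ℤ` satisfying `σ(-i) = -σ(i)`
which only moves elements of `{±1,…,±n}`. -/
def IsSignedPerm (n : ℕ) (σ : Equiv.Perm ℤ) : Prop :=
  (∀ i : ℤ, σ (-i) = -σ i) ∧ ∀ i : ℤ, (n : ℤ) < |i| → σ i = i

noncomputable def pairsB (n : ℕ) : Finset (ℤ × ℤ) := Finset.Icc 1 (n : ℤ) ×ˢ Finset.Icc 1 (n : ℤ)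

noncomputable def wexB (n : ℕ) (σ : Equiv.Perm ℤ) : ℕ :=
  ((Finset.Icc 1 (n : ℤ)).filter fun i => i ≤ σ i).card

noncomputable def dropB (n : ℕ) (σ : Equiv.Perm ℤ) : ℕ :=
  ((Finset.Icc 1 (n : ℤ)).filter fun i => σ i < i).card

noncomputable def negB (n : ℕ) (σ : Equiv.Perm ℤ) : ℕ :=
  ((Finset.Icc 1 (n : ℤ)).filter fun i => σ i < 0).card

noncomputable def fwexB (n : ℕ) (σ : Equiv.Perm ℤ) : ℕ := 2 * wexB n σ + negB n σ

noncomputable def alNestB (n : ℕ) (σ : Equiv.Perm ℤ) : ℕ :=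
  ((pairsB n).filter fun p =>
    (-p.1 < -p.2 ∧ -p.2 < -σ p.2 ∧ -σ p.2 < -σ p.1) ∨
    (-p.1 < p.2 ∧ p.2 ≤ σ p.2 ∧ σ p.2 < -σ p.1) ∨
    (p.1 < p.2 ∧ p.2 ≤ σ p.2 ∧ σ p.2 < σ p.1)).card

noncomputable def alENB (n : ℕ) (σ : Equiv.Perm ℤ) : ℕ :=
  ((pairsB n).filter fun p =>
    (-p.1 < 0 ∧ 0 < -σ p.1 ∧ -σ p.1 < σ p.2 ∧ σ p.2 < p.2) ∨
    (p.1 ≤ σ p.1 ∧ σ p.1 < σ p.2 ∧ σ p.2 < p.2)).card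

noncomputable def alNEB (n : ℕ) (σ : Equiv.Perm ℤ) : ℕ :=
  ((pairsB n).filter fun p => σ p.1 < p.1 ∧ p.1 < p.2 ∧ p.2 ≤ σ p.2).card

noncomputable def alB (n : ℕ) (σ : Equiv.Perm ℤ) : ℕ := alNestB n σ + alENB n σ + alNEB n σ

noncomputable def crsB (n : ℕ) (σ : Equiv.Perm ℤ) : ℕ :=
  ((pairsB n).filter fun p =>
    (p.1 < p.2 ∧ p.2 ≤ σ p.1 ∧ σ p.1 < σ p.2) ∨
    (-p.1 < -p.2 ∧ -p.2 < -σ p.1 ∧ -σ p.1 < -σ p.2) ∨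
    (-p.1 < p.2 ∧ p.2 ≤ -σ p.1 ∧ -σ p.1 < σ p.2)).card

noncomputable def invB (n : ℕ) (σ : Equiv.Perm ℤ) : ℕ :=
  ((pairsB n).filter fun p => p.1 < p.2 ∧ σ p.2 < σ p.1).card +
  ((pairsB n).filter fun p => p.1 ≤ p.2 ∧ σ p.2 < σ (-p.1)).card

/-- The generator `s₀` : sign change at 1. -/
def s0B : Equiv.Perm ℤ := Equiv.swap 1 (-1)

/-- The generator `sᵢ = (i, i+1)` acting as a signed permutation. -/
def sB (i : ℤ) : Equiv.Perm ℤ := Equiv.swap i (i + 1) * Equiv.swap (-i) (-(i + 1))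

/-- The Coxeter generators of `Bₙ`. -/
def gensB (n : ℕ) : Set (Equiv.Perm ℤ) :=
  {g | g = s0B ∨ ∃ i : ℤ, 1 ≤ i ∧ i ≤ (n : ℤ) - 1 ∧ g = sB i}

/-- Coxeter length: minimal number of generators expressing `σ`. -/
noncomputable def lenB (n : ℕ) (σ : Equiv.Perm ℤ) : ℕ :=
  sInf {k | ∃ w : List (Equiv.Perm ℤ), (∀ g ∈ w, g ∈ gensB n) ∧ w.length = k ∧ w.prod = σ}

/-!
Split `[n]` into the weak excedances, the positive drops `0 < σ i < i` and the negative
letters, of sizes `w`, `p` and `g`. Every pair counted by `al` or `crs` has a fixed type in this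
splitting, and the pairs can be counted row by row: the only global input is that `i ↦ |σ i|`
permutes `[n]`, so `#{i | |σ i| < m} = #{i | i < m}`. This gives
`al + crs = g w + p (n - 2) - 2 C(p, 2) + C(g, 2)`, where one `C(p, 2)` counts pairs of positive
drops ordered by position and the other by value; with `n = w + p + g` this is the formula.
-/

theorem two_mul_card_filter_lt_add_card {α β : Type*} [DecidableEq α] [LinearOrder β]
    {s : Finset α} {f : α → β} (hf : Set.InjOn f s) :
    2 * #{p ∈ s ×ˢ s | f p.1 < f p.2} + #s = #s * #s := by
  have hsplit : s.offDiag = {p ∈ s ×ˢ s | f p.1 < f p.2} ∪ {p ∈ s ×ˢ s | f p.2 < f p.1} := by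
    ext ⟨a, b⟩
    simp only [mem_offDiag, mem_union, mem_filter, mem_product]
    constructor
    · rintro ⟨ha, hb, hab⟩
      rcases lt_trichotomy (f a) (f b) with h | h | h
      · exact .inl ⟨⟨ha, hb⟩, h⟩
      · exact absurd (hf ha hb h) hab
      · exact .inr ⟨⟨ha, hb⟩, h⟩
    · rintro (⟨⟨ha, hb⟩, h⟩ | ⟨⟨ha, hb⟩, h⟩)
      · exact ⟨ha, hb, fun hab => h.ne (by rw [hab])⟩
      · exact ⟨ha, hb, fun hab => h.ne (by rw [hab])⟩
  have hdisj : Disjoint {p ∈ s ×ˢ s | f p.1 < f p.2} {p ∈ s ×ˢ s | f p.2 < f p.1} :=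
    disjoint_filter.mpr fun _ _ h h' => lt_asymm h h'
  have hswap : #{p ∈ s ×ˢ s | f p.2 < f p.1} = #{p ∈ s ×ˢ s | f p.1 < f p.2} :=
    card_equiv (Equiv.prodComm α α) fun p => by simp [and_comm]
  have hoff := offDiag_card s
  rw [hsplit, card_union_of_disjoint hdisj, hswap] at hoff
  have := Nat.le_mul_self #s
  omega

section Pairs

variable {n : ℕ}

theorem card_filter_pairsB_swap (Q : ℤ → ℤ → Prop) [DecidableRel Q] :
    #{p ∈ pairsB n | Q p.1 p.2} = #{p ∈ pairsB n | Q p.2 p.1} :=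
  card_equiv (Equiv.prodComm ℤ ℤ) fun p => by simp [pairsB, and_comm]

theorem card_filter_pairsB_and (a b : ℤ → Prop) [DecidablePred a] [DecidablePred b] :
    #{p ∈ pairsB n | a p.1 ∧ b p.2} = #{i ∈ Icc 1 (n : ℤ) | a i} * #{j ∈ Icc 1 (n : ℤ) | b j} := by
  rw [pairsB, filter_product, card_product]

theorem card_filter_pairsB_graph (a : ℤ → Prop) [DecidablePred a] (f : ℤ → ℤ)
    (hf : ∀ i ∈ Icc 1 (n : ℤ), a i → f i ∈ Icc 1 (n : ℤ)) :
    #{p ∈ pairsB n | a p.1 ∧ p.2 = f p.1} = #{i ∈ Icc 1 (n : ℤ) | a i} := by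
  symm
  refine card_nbij (fun i => (i, f i)) ?_ (fun i _ j _ h => congrArg Prod.fst h) ?_
  · intro i hi
    rw [coe_filter] at hi ⊢
    exact ⟨mem_product.mpr ⟨hi.1, hf i hi.1 hi.2⟩, hi.2, rfl⟩
  · rintro ⟨i, j⟩ hp
    rw [coe_filter] at hp
    obtain ⟨hp, ha, hj : j = f i⟩ := hp
    exact ⟨i, by rw [coe_filter]; exact ⟨(mem_product.mp hp).1, ha⟩, by rw [hj]⟩

theorem two_mul_card_filter_pairsB_lt (a : ℤ → Prop) [DecidablePred a] (f : ℤ → ℤ)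
    (hf : Set.InjOn f {i ∈ Icc 1 (n : ℤ) | a i}) :
    2 * #{p ∈ pairsB n | a p.1 ∧ a p.2 ∧ f p.1 < f p.2} + #{i ∈ Icc 1 (n : ℤ) | a i} =
      #{i ∈ Icc 1 (n : ℤ) | a i} * #{i ∈ Icc 1 (n : ℤ) | a i} := by
  have h : {p ∈ pairsB n | a p.1 ∧ a p.2 ∧ f p.1 < f p.2} =
      {p ∈ {i ∈ Icc 1 (n : ℤ) | a i} ×ˢ {i ∈ Icc 1 (n : ℤ) | a i} | f p.1 < f p.2} := by
    ext p
    simp only [pairsB, mem_filter, mem_product]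
    tauto
  rw [h]
  exact two_mul_card_filter_lt_add_card (by rwa [coe_filter])

end Pairs

noncomputable def posDropB (n : ℕ) (σ : Perm ℤ) : ℕ :=
  #{i ∈ Icc 1 (n : ℤ) | 0 < σ i ∧ σ i < i}

namespace IsSignedPerm

variable {n : ℕ} {σ : Perm ℤ} {i j : ℤ}

theorem map_zero (hσ : IsSignedPerm n σ) : σ 0 = 0 := by
  have h := hσ.1 0
  rw [neg_zero] at h
  omega

theorem abs_apply_mem_Icc (hσ : IsSignedPerm n σ) (hi : i ∈ Icc 1 (n : ℤ)) :
    |σ i| ∈ Icc 1 (n : ℤ) := by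
  rw [mem_Icc] at hi ⊢
  have hne : σ i ≠ 0 := fun h => by
    have := σ.injective (h.trans hσ.map_zero.symm)
    omega
  refine ⟨Int.one_le_abs hne, not_lt.mp fun hlt => ?_⟩
  have hfix : σ i = i := σ.injective (hσ.2 _ hlt)
  rw [hfix, abs_of_pos (by omega)] at hlt
  omega

theorem abs_apply_inj (hσ : IsSignedPerm n σ) (hi : i ∈ Icc 1 (n : ℤ)) (hj : j ∈ Icc 1 (n : ℤ)) :
    |σ i| = |σ j| ↔ i = j := by
  refine ⟨fun h => ?_, fun h => h ▸ rfl⟩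
  rw [mem_Icc] at hi hj
  rcases abs_eq_abs.mp h with h | h
  · exact σ.injective h
  · have := σ.injective (h.trans (hσ.1 j).symm)
    omega

theorem bijOn_abs_apply (hσ : IsSignedPerm n σ) :
    Set.BijOn (fun i => |σ i|) (Icc 1 (n : ℤ)) (Icc 1 (n : ℤ)) :=
  (Set.Finite.injOn_iff_bijOn_of_mapsTo (finite_toSet _) fun _ hi => hσ.abs_apply_mem_Icc hi).mp
    fun _ hi _ hj h => (hσ.abs_apply_inj hi hj).mp h

theorem card_filter_abs_apply (hσ : IsSignedPerm n σ) (Q : ℤ → ℤ → Prop) [DecidableRel Q] :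
    #{p ∈ pairsB n | Q |σ p.1| p.2} = #{p ∈ pairsB n | Q p.1 p.2} := by
  have hbij := hσ.bijOn_abs_apply
  refine card_nbij (fun p => (|σ p.1|, p.2)) ?_ ?_ ?_
  · rintro ⟨i, j⟩ hp
    rw [coe_filter] at hp ⊢
    obtain ⟨hp, hQ⟩ := hp
    exact ⟨mem_product.mpr ⟨hbij.mapsTo (mem_product.mp hp).1, (mem_product.mp hp).2⟩, hQ⟩
  · rintro ⟨i, j⟩ hp ⟨i', j'⟩ hp' h
    rw [coe_filter] at hp hp'
    obtain ⟨hi, hj⟩ := Prod.mk.inj h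
    exact Prod.ext (hbij.injOn (mem_product.mp hp.1).1 (mem_product.mp hp'.1).1 hi) hj
  · rintro ⟨a, j⟩ hp
    rw [coe_filter] at hp
    obtain ⟨hp, hQ⟩ := hp
    obtain ⟨i, hi, rfl⟩ := hbij.surjOn (mem_product.mp hp).1
    refine ⟨(i, j), ?_, rfl⟩
    rw [coe_filter]
    exact ⟨mem_product.mpr ⟨hi, (mem_product.mp hp).2⟩, hQ⟩

theorem facts_of_mem_pairsB (hσ : IsSignedPerm n σ) {p : ℤ × ℤ} (hp : p ∈ pairsB n) :
    1 ≤ p.1 ∧ p.1 ≤ n ∧ 1 ≤ p.2 ∧ p.2 ≤ n ∧ σ p.1 ≠ 0 ∧ σ p.2 ≠ 0 ∧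
      (σ p.1 = σ p.2 ↔ p.1 = p.2) ∧ σ p.1 ≠ -σ p.2 := by
  obtain ⟨hi, hj⟩ := mem_product.mp hp
  have hinj := hσ.abs_apply_inj hi hj
  have hi' := mem_Icc.mp (hσ.abs_apply_mem_Icc hi)
  have hj' := mem_Icc.mp (hσ.abs_apply_mem_Icc hj)
  rw [mem_Icc] at hi hj
  refine ⟨hi.1, hi.2, hj.1, hj.2, ?_, ?_, ⟨fun h => hinj.mp (by rw [h]), fun h => by rw [h]⟩, fun h => ?_⟩
  · rintro h; rw [h, abs_zero] at hi'; omega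
  · rintro h; rw [h, abs_zero] at hj'; omega
  · have h0 : σ p.2 = 0 := by
      rw [hinj.mp (by rw [h, abs_neg])] at h
      omega
    rw [h0, abs_zero] at hj'
    omega

/-- Crossings and nestings of the same shape pair up into one count each. -/
theorem crsB_add_alNestB (hσ : IsSignedPerm n σ) :
    crsB n σ + alNestB n σ =
      #{p ∈ pairsB n | p.1 < p.2 ∧ p.2 ≤ σ p.1 ∧ p.2 ≤ σ p.2} +
      #{p ∈ pairsB n | σ p.1 < 0 ∧ p.2 ≤ -σ p.1 ∧ p.2 ≤ σ p.2} +
      #{p ∈ pairsB n | p.2 < p.1 ∧ σ p.1 < p.2 ∧ σ p.2 < p.2} := by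
  simp only [crsB, alNestB, card_filter, ← sum_add_distrib]
  refine sum_congr rfl fun p hp => ?_
  have := hσ.facts_of_mem_pairsB hp
  split_ifs <;> omega

theorem alENB_add_card_posDrop_lt (hσ : IsSignedPerm n σ) :
    alENB n σ +
        #{p ∈ pairsB n | (0 < σ p.1 ∧ σ p.1 < p.1) ∧ (0 < σ p.2 ∧ σ p.2 < p.2) ∧ σ p.1 < σ p.2} =
      #{p ∈ pairsB n | (0 < σ p.2 ∧ σ p.2 < p.2) ∧ p.1 < σ p.2} := by
  rw [← hσ.card_filter_abs_apply fun a j => (0 < σ j ∧ σ j < j) ∧ a < σ j]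
  simp only [alENB, card_filter, ← sum_add_distrib]
  refine sum_congr rfl fun p hp => ?_
  have := hσ.facts_of_mem_pairsB hp
  rw [abs_eq_max_neg]
  split_ifs <;> omega

theorem card_wex_pairs_add_alNEB (hσ : IsSignedPerm n σ) :
    #{p ∈ pairsB n | p.1 < p.2 ∧ p.2 ≤ σ p.1 ∧ p.2 ≤ σ p.2} +
        #{p ∈ pairsB n | σ p.1 < 0 ∧ p.2 ≤ -σ p.1 ∧ p.2 ≤ σ p.2} + alNEB n σ =
      negB n σ * wexB n σ +
        #{p ∈ pairsB n | (0 < σ p.1 ∧ σ p.1 < p.1) ∧ p.2 ≤ σ p.2 ∧ σ p.1 < p.2} := by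
  have hτ := hσ.card_filter_abs_apply fun a j => j ≤ σ j ∧ a < j
  have hsplit :
      #{p ∈ pairsB n | p.1 < p.2 ∧ p.2 ≤ σ p.1 ∧ p.2 ≤ σ p.2} +
        #{p ∈ pairsB n | σ p.1 < 0 ∧ p.2 ≤ -σ p.1 ∧ p.2 ≤ σ p.2} + alNEB n σ +
        #{p ∈ pairsB n | p.2 ≤ σ p.2 ∧ |σ p.1| < p.2} =
      #{p ∈ pairsB n | p.2 ≤ σ p.2 ∧ p.1 < p.2} + #{p ∈ pairsB n | σ p.1 < 0 ∧ p.2 ≤ σ p.2} +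
        #{p ∈ pairsB n | (0 < σ p.1 ∧ σ p.1 < p.1) ∧ p.2 ≤ σ p.2 ∧ σ p.1 < p.2} := by
    simp only [alNEB, card_filter, ← sum_add_distrib]
    refine sum_congr rfl fun p hp => ?_
    have := hσ.facts_of_mem_pairsB hp
    rw [abs_eq_max_neg]
    split_ifs <;> omega
  rw [negB, wexB, ← card_filter_pairsB_and]
  omega

theorem card_posDrop_pairs (hσ : IsSignedPerm n σ) :
    #{p ∈ pairsB n | (0 < σ p.1 ∧ σ p.1 < p.1) ∧ p.2 ≤ σ p.2 ∧ σ p.1 < p.2} +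
        #{p ∈ pairsB n | (0 < σ p.2 ∧ σ p.2 < p.2) ∧ p.1 < σ p.2} +
        #{p ∈ pairsB n | p.2 < p.1 ∧ σ p.1 < p.2 ∧ σ p.2 < p.2} +
        #{p ∈ pairsB n | (0 < σ p.1 ∧ σ p.1 < p.1) ∧ (0 < σ p.2 ∧ σ p.2 < p.2) ∧ p.1 < p.2} +
        2 * posDropB n σ =
      posDropB n σ * n + #{p ∈ pairsB n | σ p.1 < 0 ∧ σ p.2 < 0 ∧ p.1 < p.2} := by
  have hT3 :
      #{p ∈ pairsB n | p.2 < p.1 ∧ σ p.1 < p.2 ∧ σ p.2 < p.2} =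
        #{p ∈ pairsB n | (0 < σ p.1 ∧ σ p.1 < p.1) ∧ σ p.2 < p.2 ∧ σ p.1 < p.2 ∧ p.2 < p.1} +
        #{p ∈ pairsB n | (0 < σ p.2 ∧ σ p.2 < p.2) ∧ σ p.1 < 0 ∧ p.2 < p.1} +
        #{p ∈ pairsB n | σ p.2 < 0 ∧ σ p.1 < 0 ∧ p.2 < p.1} := by
    simp only [card_filter, ← sum_add_distrib]
    refine sum_congr rfl fun p hp => ?_
    have := hσ.facts_of_mem_pairsB hp
    split_ifs <;> omega
  have hrow :
      #{p ∈ pairsB n | (0 < σ p.1 ∧ σ p.1 < p.1) ∧ p.2 ≤ σ p.2 ∧ σ p.1 < p.2} +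
        #{p ∈ pairsB n | (0 < σ p.1 ∧ σ p.1 < p.1) ∧ p.2 < σ p.1} +
        #{p ∈ pairsB n | (0 < σ p.1 ∧ σ p.1 < p.1) ∧ σ p.2 < p.2 ∧ σ p.1 < p.2 ∧ p.2 < p.1} +
        #{p ∈ pairsB n | (0 < σ p.1 ∧ σ p.1 < p.1) ∧ (0 < σ p.2 ∧ σ p.2 < p.2) ∧ p.1 < p.2} +
        #{p ∈ pairsB n | (0 < σ p.1 ∧ σ p.1 < p.1) ∧ σ p.2 < 0 ∧ p.1 < p.2} +
        #{p ∈ pairsB n | (0 < σ p.1 ∧ σ p.1 < p.1) ∧ p.2 = p.1} +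
        #{p ∈ pairsB n | (0 < σ p.1 ∧ σ p.1 < p.1) ∧ p.2 = σ p.1} =
      #{p ∈ pairsB n | 0 < σ p.1 ∧ σ p.1 < p.1} := by
    -- for a positive drop `i`, each `j` lies in exactly one of the seven classes
    simp only [card_filter, ← sum_add_distrib]
    refine sum_congr rfl fun p hp => ?_
    have := hσ.facts_of_mem_pairsB hp
    split_ifs <;> omega
  have hswap₁ := card_filter_pairsB_swap (n := n) fun i j => (0 < σ j ∧ σ j < j) ∧ i < σ j
  have hswap₂ := card_filter_pairsB_swap (n := n)
    fun i j => (0 < σ i ∧ σ i < i) ∧ σ j < 0 ∧ i < j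
  have hswap₃ := card_filter_pairsB_swap (n := n) fun i j => σ i < 0 ∧ σ j < 0 ∧ i < j
  have hdiag := card_filter_pairsB_graph (n := n) (fun i => 0 < σ i ∧ σ i < i) (fun i => i)
    fun _ hi _ => hi
  have hgraph := card_filter_pairsB_graph (n := n) (fun i => 0 < σ i ∧ σ i < i) σ
    fun i hi h => by rw [mem_Icc] at hi ⊢; omega
  have hcol := card_filter_pairsB_and (n := n) (fun i => 0 < σ i ∧ σ i < i) fun _ => True
  rw [filter_true_of_mem fun _ _ => trivial, Int.card_Icc, add_sub_cancel_right,
    Int.toNat_natCast] at hcol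
  simp only [and_true] at hcol
  rw [posDropB]
  omega

theorem wexB_add_posDropB_add_negB (hσ : IsSignedPerm n σ) :
    wexB n σ + posDropB n σ + negB n σ = n := by
  calc wexB n σ + posDropB n σ + negB n σ = ∑ _i ∈ Icc 1 (n : ℤ), 1 := by
        simp only [wexB, posDropB, negB, card_filter, ← sum_add_distrib]
        refine sum_congr rfl fun i hi => ?_
        have := hσ.abs_apply_mem_Icc hi
        rw [mem_Icc, abs_eq_max_neg] at this
        rw [mem_Icc] at hi
        split_ifs <;> omega
    _ = n := by simp

end IsSignedPerm

theorem al_add_crs (n : ℕ) (σ : Equiv.Perm ℤ) (hσ : IsSignedPerm n σ) :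
    ((alB n σ + crsB n σ : ℕ) : ℚ) =
      ((n : ℚ) - (fwexB n σ : ℚ) / 2) * ((wexB n σ : ℚ) - 1 + (negB n σ : ℚ)) +
        (negB n σ : ℚ) * (wexB n σ : ℚ) / 2 := by
  have hcrs := hσ.crsB_add_alNestB
  have hEN := hσ.alENB_add_card_posDrop_lt
  have hW := hσ.card_wex_pairs_add_alNEB
  have hP := hσ.card_posDrop_pairs
  have hPσ := two_mul_card_filter_pairsB_lt (n := n) (fun i => 0 < σ i ∧ σ i < i) σ
    σ.injective.injOn
  have hPid := two_mul_card_filter_pairsB_lt (n := n) (fun i => 0 < σ i ∧ σ i < i) (fun i => i)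
    fun _ _ _ _ h => h
  have hNid := two_mul_card_filter_pairsB_lt (n := n) (fun i => σ i < 0) (fun i => i)
    fun _ _ _ _ h => h
  rw [← posDropB] at hPσ hPid
  rw [← negB] at hNid
  have hA : 2 * (alB n σ + crsB n σ) + 2 * posDropB n σ + 2 * (posDropB n σ * posDropB n σ) +
      negB n σ = 2 * (negB n σ * wexB n σ) + 2 * (posDropB n σ * n) + negB n σ * negB n σ := by
    rw [alB]
    omega
  have hn : (n : ℚ) = wexB n σ + posDropB n σ + negB n σ := by
    exact_mod_cast hσ.wexB_add_posDropB_add_negB.symm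
  rw [fwexB]
  push_cast
  qify at hA
  linear_combination hA / 2 + ((posDropB n σ : ℚ) + 1 - wexB n σ - negB n σ) * hn
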